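/- Let λ ∈ ℂ with 0 < |λ| < 1/2, and define φ on the open unit disk 𝔻 by φ(z) = z − λ·|z|². Then: (i) the Jacobian of φ satisfies J_φ(z) = 1 − 2·Re(λ·z̄) ≥ 1 − 2|λ| > 0 for all z ∈ 𝔻; (ii) Dφ(z) = z·φ_z(z) − z̄·φ_z̄(z) = z and D²φ(z) = z for all z ∈ 𝔻; and (iii) φ is injective on 𝔻. -/

import Mathlib

open Complex Metric Set

noncomputable def wz (f : ℂ → ℂ) (z : ℂ) : ℂ :=
  (1 / 2) * (fderiv ℝ f z 1 - Complex.I * fderiv ℝ f z Complex.I)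

noncomputable def wzbar (f : ℂ → ℂ) (z : ℂ) : ℂ :=
  (1 / 2) * (fderiv ℝ f z 1 + Complex.I * fderiv ℝ f z Complex.I)

noncomputable def Dop (f : ℂ → ℂ) (z : ℂ) : ℂ :=
  z * wz f z - (starRingEnd ℂ) z * wzbar f z

/-!
The real derivative of `φ(w) = w - λ w w̄` at `z` is `v ↦ (1 - λ z̄) v - λ z v̄`, from which
`φ_z = 1 - λ z̄`, `φ_z̄ = -λ z` and `Dφ = z` are read off. For injectivity, `φ a = φ b` gives
`|a - b| = |λ| · ||a|² - |b|²| ≤ |λ| (|a| + |b|) |a - b|`, and `|λ| (|a| + |b|) < 1` on the disk.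
-/

open ComplexConjugate

section Wirtinger

variable {f : ℂ → ℂ} {z a b : ℂ}

lemma wz_eq_of_hasFDerivAt
    (hf : HasFDerivAt f (a • ContinuousLinearMap.id ℝ ℂ + b • (conjCLE : ℂ →L[ℝ] ℂ)) z) :
    wz f z = a := by
  simp only [wz, hf.fderiv, add_apply, smul_apply, ContinuousLinearMap.id_apply, smul_eq_mul,
    ContinuousLinearEquiv.coe_coe, conjCLE_apply, map_one, conj_I]
  linear_combination (b - a) / 2 * I_sq

lemma wzbar_eq_of_hasFDerivAt
    (hf : HasFDerivAt f (a • ContinuousLinearMap.id ℝ ℂ + b • (conjCLE : ℂ →L[ℝ] ℂ)) z) :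
    wzbar f z = b := by
  simp only [wzbar, hf.fderiv, add_apply, smul_apply, ContinuousLinearMap.id_apply, smul_eq_mul,
    ContinuousLinearEquiv.coe_coe, conjCLE_apply, map_one, conj_I]
  linear_combination (a - b) / 2 * I_sq

lemma Dop_eq_of_hasFDerivAt
    (hf : HasFDerivAt f (a • ContinuousLinearMap.id ℝ ℂ + b • (conjCLE : ℂ →L[ℝ] ℂ)) z) :
    Dop f z = z * a - conj z * b := by
  rw [Dop, wz_eq_of_hasFDerivAt hf, wzbar_eq_of_hasFDerivAt hf]

end Wirtinger

lemma Dop_id : Dop (fun w => w) = fun w => w := by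
  funext z
  have hid : HasFDerivAt (fun w : ℂ => w)
      ((1 : ℂ) • ContinuousLinearMap.id ℝ ℂ + (0 : ℂ) • (conjCLE : ℂ →L[ℝ] ℂ)) z := by
    refine (hasFDerivAt_id (𝕜 := ℝ) z).congr_fderiv ?_
    simp
  rw [Dop_eq_of_hasFDerivAt hid]
  ring

lemma hasFDerivAt_sub_mul_normSq (lam z : ℂ) :
    HasFDerivAt (fun w => w - lam * (normSq w : ℂ))
      ((1 - lam * conj z) • ContinuousLinearMap.id ℝ ℂ
        + (-(lam * z)) • (conjCLE : ℂ →L[ℝ] ℂ)) z := by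
  have hprod : HasFDerivAt (fun w : ℂ => w * conj w)
      (z • (conjCLE : ℂ →L[ℝ] ℂ) + conj z • ContinuousLinearMap.id ℝ ℂ) z :=
    (hasFDerivAt_id z).mul conjCLE.hasFDerivAt
  simp_rw [← mul_conj]
  refine ((hasFDerivAt_id z).sub (hprod.const_mul lam)).congr_fderiv ?_
  ext1 v
  simp only [smul_add, sub_apply, ContinuousLinearMap.id_apply, add_apply, smul_apply,
    ContinuousLinearEquiv.coe_coe, conjCLE_apply, smul_eq_mul]
  ring

lemma Dop_sub_mul_normSq (lam : ℂ) :
    Dop (fun w => w - lam * (normSq w : ℂ)) = fun w => w := by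
  funext z
  rw [Dop_eq_of_hasFDerivAt (hasFDerivAt_sub_mul_normSq lam z)]
  ring

lemma norm_one_sub_sq_sub_norm_sq (w : ℂ) : ‖1 - w‖ ^ 2 - ‖w‖ ^ 2 = 1 - 2 * w.re := by
  simp only [Complex.sq_norm, normSq_apply, sub_re, sub_im, one_re, one_im]
  ring

lemma jacobian_sub_mul_normSq (lam z : ℂ) :
    ‖wz (fun w => w - lam * (normSq w : ℂ)) z‖ ^ 2
      - ‖wzbar (fun w => w - lam * (normSq w : ℂ)) z‖ ^ 2 = 1 - 2 * (lam * conj z).re := by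
  rw [wz_eq_of_hasFDerivAt (hasFDerivAt_sub_mul_normSq lam z),
    wzbar_eq_of_hasFDerivAt (hasFDerivAt_sub_mul_normSq lam z), norm_neg,
    ← norm_one_sub_sq_sub_norm_sq]
  simp

lemma re_mul_conj_le_of_norm_le {lam z : ℂ} (hz : ‖z‖ ≤ 1) : (lam * conj z).re ≤ ‖lam‖ :=
  calc (lam * conj z).re ≤ ‖lam * conj z‖ := re_le_norm _
    _ = ‖lam‖ * ‖z‖ := by simp
    _ ≤ ‖lam‖ := mul_le_of_le_one_right (norm_nonneg lam) hz

lemma abs_normSq_sub_normSq_le (a b : ℂ) :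
    |normSq a - normSq b| ≤ (‖a‖ + ‖b‖) * ‖a - b‖ := by
  rw [← Complex.sq_norm, ← Complex.sq_norm, sq_sub_sq, abs_mul, abs_of_nonneg (by positivity)]
  exact mul_le_mul_of_nonneg_left (abs_norm_sub_norm_le a b) (by positivity)

lemma injOn_sub_mul_normSq {lam : ℂ} {r : ℝ} (hr : 2 * ‖lam‖ * r ≤ 1) :
    InjOn (fun w => w - lam * (normSq w : ℂ)) (ball 0 r) := by
  intro a ha b hb hab
  rw [mem_ball_zero_iff] at ha hb
  have hdiff : a - b = lam * ((normSq a - normSq b : ℝ) : ℂ) := by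
    push_cast
    linear_combination hab
  have hcontr : ‖a - b‖ ≤ ‖lam‖ * (‖a‖ + ‖b‖) * ‖a - b‖ := by
    rw [mul_assoc]
    calc ‖a - b‖ = ‖lam‖ * |normSq a - normSq b| := by
          rw [hdiff, norm_mul, norm_real, Real.norm_eq_abs]
      _ ≤ _ := mul_le_mul_of_nonneg_left (abs_normSq_sub_normSq_le a b) (norm_nonneg lam)
  have hsmall : ‖lam‖ * (‖a‖ + ‖b‖) < 1 := by
    rcases (norm_nonneg lam).eq_or_lt with hlam | hlam
    · simp [← hlam]
    · nlinarith
  by_contra hne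
  have hpos : 0 < ‖a - b‖ := norm_pos_iff.mpr (sub_ne_zero.mpr hne)
  nlinarith

theorem stmt_19_general (lam : ℂ)
    (hlam : ‖lam‖ < 1 / 2)
    (φ : ℂ → ℂ) (hφ : ∀ z, φ z = z - lam * (Complex.normSq z : ℂ)) :
    (∀ z ∈ ball (0 : ℂ) 1,
        ‖wz φ z‖ ^ 2 - ‖wzbar φ z‖ ^ 2
            = 1 - 2 * (lam * (starRingEnd ℂ) z).re ∧
          1 - 2 * ‖lam‖ ≤ 1 - 2 * (lam * (starRingEnd ℂ) z).re ∧
          0 < 1 - 2 * ‖lam‖) ∧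
      (∀ z ∈ ball (0 : ℂ) 1, Dop φ z = z ∧ Dop (Dop φ) z = z) ∧
      Set.InjOn φ (ball (0 : ℂ) 1) := by
  obtain rfl : φ = fun w => w - lam * (normSq w : ℂ) := funext hφ
  refine ⟨fun z hz => ⟨jacobian_sub_mul_normSq lam z, ?_, by linarith⟩,
    fun z _ => ⟨by rw [Dop_sub_mul_normSq], by rw [Dop_sub_mul_normSq, Dop_id]⟩,
    injOn_sub_mul_normSq (by linarith)⟩
  have hre := re_mul_conj_le_of_norm_le (lam := lam) (mem_ball_zero_iff.mp hz).le
  linarith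

theorem stmt_19 (lam : ℂ) (hlam0 : 0 < ‖lam‖)
    (hlam : ‖lam‖ < 1 / 2)
    (φ : ℂ → ℂ) (hφ : ∀ z, φ z = z - lam * (Complex.normSq z : ℂ)) :
    (∀ z ∈ ball (0 : ℂ) 1,
        ‖wz φ z‖ ^ 2 - ‖wzbar φ z‖ ^ 2
            = 1 - 2 * (lam * (starRingEnd ℂ) z).re ∧
          1 - 2 * ‖lam‖ ≤ 1 - 2 * (lam * (starRingEnd ℂ) z).re ∧
          0 < 1 - 2 * ‖lam‖) ∧
      (∀ z ∈ ball (0 : ℂ) 1, Dop φ z = z ∧ Dop (Dop φ) z = z) ∧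
      Set.InjOn φ (ball (0 : ℂ) 1) :=
  stmt_19_general lam hlam φ hφ
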